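/- arXiv:1806.03137 — 2 statements merged into one kernel-verified Lean document; each statement's English description precedes it below -/
import Mathlib

section
/- Let m ≥ 3 be an integer, ℓ a prime number dividing m, and f := ℓ·m. Let ζ be a primitive f-th root of unity in a field of characteristic zero, and set ζ_m := ζ^ℓ, a primitive m-th root of unity. Then N_{ℚ(ζ)/ℚ(ζ_m)}(1 − ζ) = 1 − ζ_m, where N_{ℚ(ζ)/ℚ(ζ_m)} denotes the field norm from the f-th cyclotomic field ℚ(ζ) to its subfield ℚ(ζ_m). -/
/-!
Over `F = ℚ(ζ^ℓ)` the element `ζ` is a root of `X^ℓ - ζ^ℓ`, and comparing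
`φ(ℓ m) = ℓ φ(m)` (this is where `ℓ ∣ m` enters) shows `[F(ζ) : F] = ℓ`, so this polynomial is
the minimal polynomial of `ζ`. For any generator `α` with minimal polynomial `p`, `N(r - α)` is
the characteristic polynomial of multiplication by `α` evaluated at `r`, i.e. `p(r)`; at `r = 1`
this gives `1 - ζ^ℓ`.
-/

open IntermediateField Polynomial Module

theorem Algebra.PowerBasis.norm_algebraMap_sub_gen {R S : Type*} [CommRing R] [Ring S]
    [Algebra R S] (pb : PowerBasis R S) (r : R) :
    Algebra.norm R (algebraMap R S r - pb.gen) = (minpoly R pb.gen).eval r := by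
  rw [Algebra.norm_eq_matrix_det pb.basis, map_sub, AlgHom.commutes, ← charpoly_leftMulMatrix,
    Matrix.eval_charpoly, Matrix.algebraMap_eq_diagonal]
  rfl

theorem IntermediateField.finrank_mul_finrank_adjoin_simple_of_le {F K : Type*} [Field F] [Field K]
    [Algebra F K] {E : IntermediateField F K} {α : K} (hE : E ≤ F⟮α⟯) :
    finrank F E * finrank E E⟮α⟯ = finrank F F⟮α⟯ := by
  have h : E⟮α⟯.restrictScalars F = F⟮α⟯ := by
    rw [restrictScalars_adjoin_eq_sup, sup_of_le_right hE]
  rw [← h]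
  exact Module.finrank_mul_finrank F E E⟮α⟯

theorem minpoly_eq_X_pow_sub_C_of_finrank_adjoin {F K : Type*} [Field F] [Field K] [Algebra F K]
    {α : K} {n : ℕ} {a : F} (hn : 0 < n) (hα : α ^ n = algebraMap F K a)
    (hdeg : finrank F F⟮α⟯ = n) : minpoly F α = X ^ n - C a := by
  have hroot : aeval α (X ^ n - C a) = 0 := by simp [hα]
  have hint : IsIntegral F α :=
    ⟨_, monic_X_pow_sub_C a hn.ne', by simpa [eval₂_eq_eval_map] using hroot⟩
  refine (eq_of_monic_of_dvd_of_natDegree_le (minpoly.monic hint) (monic_X_pow_sub_C a hn.ne')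
    (minpoly.dvd F α hroot) ?_).symm
  rw [natDegree_X_pow_sub_C, ← adjoin.finrank hint, hdeg]

theorem IsPrimitiveRoot.finrank_adjoin_rat {K : Type*} [Field K] [CharZero K] {ζ : K} {n : ℕ}
    (hn : 0 < n) (hζ : IsPrimitiveRoot ζ n) : finrank ℚ ℚ⟮ζ⟯ = n.totient := by
  rw [adjoin.finrank ((hζ.isIntegral hn).tower_top), ← cyclotomic_eq_minpoly_rat hζ hn,
    natDegree_cyclotomic]

theorem IsPrimitiveRoot.finrank_adjoin_pow_prime_adjoin {K : Type*} [Field K] [CharZero K]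
    {ζ : K} {m ℓ : ℕ} (hm : 0 < m) (hℓ : ℓ.Prime) (hdvd : ℓ ∣ m)
    (hζ : IsPrimitiveRoot ζ (ℓ * m)) : finrank ℚ⟮ζ ^ ℓ⟯ ℚ⟮ζ ^ ℓ⟯⟮ζ⟯ = ℓ := by
  have hℓm : 0 < ℓ * m := Nat.mul_pos hℓ.pos hm
  have hle : ℚ⟮ζ ^ ℓ⟯ ≤ ℚ⟮ζ⟯ := adjoin_simple_le_iff.2 (pow_mem (mem_adjoin_simple_self ℚ ζ) ℓ)
  have htower := finrank_mul_finrank_adjoin_simple_of_le hle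
  rw [(hζ.pow hℓm rfl).finrank_adjoin_rat hm, hζ.finrank_adjoin_rat hℓm,
    Nat.totient_mul_of_prime_of_dvd hℓ hdvd, mul_comm ℓ] at htower
  exact Nat.eq_of_mul_eq_mul_left (Nat.totient_pos.2 hm) htower

theorem statement4 {K : Type*} [Field K] [CharZero K] (m ℓ : ℕ) (hm : 3 ≤ m)
    (hℓ : ℓ.Prime) (hdvd : ℓ ∣ m) (ζ : K) (hζ : IsPrimitiveRoot ζ (ℓ * m)) :
    Algebra.norm ℚ⟮ζ ^ ℓ⟯
        (1 - IntermediateField.AdjoinSimple.gen ℚ⟮ζ ^ ℓ⟯ ζ)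
      = 1 - IntermediateField.AdjoinSimple.gen ℚ (ζ ^ ℓ) := by
  set F := ℚ⟮ζ ^ ℓ⟯
  have hm0 : 0 < m := by omega
  have hminpoly : minpoly F ζ = X ^ ℓ - C (AdjoinSimple.gen ℚ (ζ ^ ℓ)) :=
    minpoly_eq_X_pow_sub_C_of_finrank_adjoin hℓ.pos (AdjoinSimple.algebraMap_gen ℚ (ζ ^ ℓ)).symm
      (hζ.finrank_adjoin_pow_prime_adjoin hm0 hℓ hdvd)
  have hint : IsIntegral F ζ := (hζ.isIntegral (Nat.mul_pos hℓ.pos hm0)).tower_top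
  have hnorm := Algebra.PowerBasis.norm_algebraMap_sub_gen (adjoin.powerBasis hint) 1
  rw [map_one, adjoin.powerBasis_gen, minpoly_gen, hminpoly] at hnorm
  simpa only [eval_sub, eval_pow, eval_X, one_pow, eval_C] using hnorm
end

section
/- Let f ≥ 3 be an integer, m ≥ 1 a divisor of f, and H a subgroup of (ℤ/mℤ)ˣ. Let ρ : ℚ[(ℤ/fℤ)ˣ] → ℚ[((ℤ/mℤ)ˣ)/H] be the ℚ-algebra homomorphism induced by the composite group surjection (ℤ/fℤ)ˣ → (ℤ/mℤ)ˣ → ((ℤ/mℤ)ˣ)/H. If either (a) there exists a prime ℓ dividing f, not dividing m, whose class in (ℤ/mℤ)ˣ belongs to H, or (b) the class of −1 in (ℤ/mℤ)ˣ belongs to H, then ρ(S_f) = 0. -/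
open scoped BigOperators

/-- The Stickelberger element `S_f ∈ ℚ[(ℤ/fℤ)ˣ]`,
`S_f := −Σ_{1≤a≤f, gcd(a,f)=1} (a/f − 1/2)·[ā]⁻¹`. -/
noncomputable def stickelberger (f : ℕ) : MonoidAlgebra ℚ (ZMod f)ˣ :=
  -(∑ a ∈ Finset.Icc 1 f,
      if h : Nat.Coprime a f then
        ((a : ℚ) / f - 1 / 2) • MonoidAlgebra.single ((ZMod.unitOfCoprime a h)⁻¹) (1 : ℚ)
      else 0)

/-!
After applying `ρ`, the term of `S_f` at `a` only depends on `a` through the class of `a⁻¹` in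
`(ℤ/mℤ)ˣ/H`. If `-1 ∈ H`, the terms at `a` and `f - a` cancel because their weights
`a/f - 1/2` are opposite. If `ℓ ∈ H`, write `f = ℓ^k f₀` with `ℓ ∤ f₀`: being coprime to `f` means
being coprime to `f₀` and prime to `ℓ`, and since multiplication by `ℓ` becomes invisible after
`ρ`, discarding the multiples of `ℓ` turns the sum into `B_f(χ) - B_{f/ℓ}(χ)` for a single
`f₀`-periodic function `χ`, where `B_N(χ) = Σ_{a ≤ N} (a/N - 1/2) χ(a)`. The multiplication
formula `Σ_{j<k} B₁((x + j)/k) = B₁(x)` for `B₁(x) = x - 1/2` gives `B_{k f₀}(χ) = B_{f₀}(χ)` for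
every `k ≥ 1`, so the difference vanishes.
-/

open Finset Function

theorem sum_range_div_sub_half (x : ℚ) {k : ℕ} (hk : k ≠ 0) :
    ∑ j ∈ range k, ((x + j) / k - 1 / 2) = x - 1 / 2 := by
  have hgauss : (∑ j ∈ range k, (j : ℚ)) * 2 = k * (k - 1) := by
    have := congrArg (Nat.cast : ℕ → ℚ) (sum_range_id_mul_two k)
    push_cast [Nat.cast_sub (Nat.one_le_iff_ne_zero.mpr hk)] at this
    exact this
  rw [sum_sub_distrib, ← sum_div, sum_add_distrib, sum_const, card_range, nsmul_eq_mul,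
    sum_const, card_range, nsmul_eq_mul]
  field_simp
  linarith

theorem sum_Icc_mul_eq_sum_sum {M : Type*} [AddCommMonoid M] (g : ℕ → M) (k N : ℕ) :
    ∑ a ∈ Icc 1 (k * N), g a = ∑ c ∈ Icc 1 N, ∑ j ∈ range k, g (c + j * N) := by
  simp only [show ∀ n, Icc 1 n = Ioc 0 n from Icc_add_one_left_eq_Ioc 0]
  induction k with
  | zero => simp
  | succ k ih =>
    rw [Nat.succ_mul, ← sum_Ioc_consecutive _ (Nat.zero_le _) (Nat.le_add_right _ _), ih,
      show Ioc (k * N) (k * N + N) = (Ioc 0 N).map (addRightEmbedding (k * N)) by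
        rw [map_add_right_Ioc, zero_add, add_comm], sum_map]
    simp [sum_range_succ, sum_add_distrib]

section BernoulliSum

variable {M : Type*} [AddCommGroup M] [Module ℚ M]

noncomputable def bernoulliSum (N : ℕ) (φ : ℕ → M) : M :=
  ∑ a ∈ Icc 1 N, ((a : ℚ) / N - 1 / 2) • φ a

theorem bernoulliSum_mul_of_periodic {φ : ℕ → M} {N : ℕ} (hφ : Periodic φ N) {k : ℕ}
    (hk : k ≠ 0) :
    bernoulliSum (k * N) φ = bernoulliSum N φ := by
  rcases N.eq_zero_or_pos with rfl | hN
  · simp [bernoulliSum]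
  rw [bernoulliSum, sum_Icc_mul_eq_sum_sum]
  refine sum_congr rfl fun c _ => ?_
  have hweight (j : ℕ) :
      ((c + j * N : ℕ) : ℚ) / (k * N : ℕ) - 1 / 2 = (c / N + j) / k - 1 / 2 := by
    push_cast
    field_simp
  have hperiod (j : ℕ) : φ (c + j * N) = φ c := by simpa using hφ.nat_mul j c
  simp only [hweight, hperiod, ← sum_smul, sum_range_div_sub_half _ hk]

theorem bernoulliSum_eq_zero_of_reflect {φ : ℕ → M} {N : ℕ} (hN : φ N = 0)
    (hφ : ∀ a < N, φ (N - a) = φ a) : bernoulliSum N φ = 0 := by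
  rcases N.eq_zero_or_pos with rfl | hNpos
  · simp [bernoulliSum]
  set term : ℕ → M := fun a => ((a : ℚ) / N - 1 / 2) • φ a
  have hterm : ∀ a ∈ Ico 1 N, term (N - a) = -term a := by
    intro a ha
    rw [mem_Ico] at ha
    simp only [term, hφ a (by omega), Nat.cast_sub ha.2.le, ← neg_smul]
    congr 1
    field_simp
    ring
  have hsum : ∑ a ∈ Ico 1 N, term a = -∑ a ∈ Ico 1 N, term a := by
    have h := sum_Ico_reflect term 1 (Nat.le_succ N)
    rwa [Nat.add_sub_cancel_left, Nat.add_sub_cancel, sum_congr rfl hterm, sum_neg_distrib,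
      eq_comm] at h
  have htwice : (2 : ℚ) • ∑ a ∈ Ico 1 N, term a = 0 := by
    rw [two_smul]
    nth_rewrite 1 [hsum]
    exact neg_add_cancel _
  rw [bernoulliSum, ← Ico_add_one_right_eq_Icc, sum_Ico_succ_top hNpos, hN, smul_zero, add_zero]
  exact (smul_eq_zero.mp htwice).resolve_left two_ne_zero

theorem bernoulliSum_ite_dvd {φ : ℕ → M} {ℓ N : ℕ} (hℓ : ℓ ≠ 0) (hℓN : ℓ ∣ N) :
    bernoulliSum N (fun a => if ℓ ∣ a then 0 else φ a)
      = bernoulliSum N φ - bernoulliSum (N / ℓ) (fun b => φ (ℓ * b)) := by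
  obtain ⟨n, rfl⟩ := hℓN
  have hℓpos : 0 < ℓ := Nat.pos_of_ne_zero hℓ
  have hmultiples :
      {a ∈ Icc 1 (ℓ * n) | ℓ ∣ a} = (Icc 1 n).map ⟨(ℓ * ·), mul_right_injective₀ hℓ⟩ := by
    ext a
    simp only [mem_filter, mem_Icc, mem_map, Embedding.coeFn_mk]
    constructor
    · rintro ⟨⟨h1, h2⟩, b, rfl⟩
      exact ⟨b, ⟨Nat.pos_of_mul_pos_left h1, Nat.le_of_mul_le_mul_left h2 hℓpos⟩, rfl⟩
    · rintro ⟨b, ⟨h1, h2⟩, rfl⟩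
      exact ⟨⟨Nat.mul_pos hℓpos h1, Nat.mul_le_mul_left ℓ h2⟩, dvd_mul_right ℓ b⟩
  have hweight (b : ℕ) : ((ℓ * b : ℕ) : ℚ) / (ℓ * n : ℕ) = (b : ℚ) / n := by
    push_cast
    exact mul_div_mul_left _ _ (Nat.cast_ne_zero.mpr hℓ)
  set w : ℕ → ℚ := fun a => (a : ℚ) / (ℓ * n : ℕ) - 1 / 2
  have hsplit := sum_filter_not_add_sum_filter (Icc 1 (ℓ * n)) (ℓ ∣ ·) fun a => w a • φ a
  rw [hmultiples, sum_map] at hsplit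
  have hkeep : ∑ a ∈ Icc 1 (ℓ * n), w a • (if ℓ ∣ a then 0 else φ a)
      = ∑ a ∈ Icc 1 (ℓ * n) with ¬ℓ ∣ a, w a • φ a := by
    rw [sum_filter]
    exact sum_congr rfl fun a _ => by by_cases h : ℓ ∣ a <;> simp [h]
  simp only [bernoulliSum, Nat.mul_div_cancel_left _ hℓpos]
  rw [hkeep, ← hsplit]
  simp only [w, Embedding.coeFn_mk, hweight, add_sub_cancel_right]

theorem bernoulliSum_coprime_eq_zero_of_reflect {φ : ℕ → M} {N : ℕ} (hN : N ≠ 1)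
    (hφ : ∀ a < N, φ (N - a) = φ a) :
    bernoulliSum N (fun a => if a.Coprime N then φ a else 0) = 0 := by
  refine bernoulliSum_eq_zero_of_reflect (by simp [hN]) fun a ha => ?_
  simp only [Nat.coprime_self_sub_left ha.le, hφ a ha]

theorem bernoulliSum_coprime_eq_zero_of_mul_prime {φ : ℕ → M} {m N ℓ : ℕ} (hφ : Periodic φ m)
    (hℓ : ℓ.Prime) (hℓN : ℓ ∣ N) (hℓm : ¬ℓ ∣ m) (hmN : m ∣ N) (hφℓ : ∀ a, φ (ℓ * a) = φ a)
    (hN : N ≠ 0) :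
    bernoulliSum N (fun a => if a.Coprime N then φ a else 0) = 0 := by
  obtain ⟨k, N₀, hℓN₀, rfl⟩ := Nat.exists_eq_pow_mul_and_not_dvd hN ℓ hℓ.ne_one
  have hk : k ≠ 0 := by
    rintro rfl
    exact hℓN₀ (by simpa using hℓN)
  have hmN₀ : m ∣ N₀ :=
    ((Nat.coprime_comm.mp (hℓ.coprime_iff_not_dvd.mpr hℓm)).pow_right k).dvd_of_dvd_mul_left hmN
  set χ : ℕ → M := fun a => if a.Coprime N₀ then φ a else 0
  have hφN₀ : Periodic φ N₀ := by
    obtain ⟨q, rfl⟩ := hmN₀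
    simpa [mul_comm] using hφ.nat_mul q
  have hχ : Periodic χ N₀ := fun a => by
    simp only [χ, Nat.coprime_add_self_left, hφN₀ a]
  have hχℓ (a : ℕ) : χ (ℓ * a) = χ a := by
    simp only [χ, Nat.coprime_mul_iff_left, hφℓ,
      and_iff_right (hℓ.coprime_iff_not_dvd.mpr hℓN₀)]
  have hsplit : (fun a => if a.Coprime (ℓ ^ k * N₀) then φ a else 0)
      = fun a => if ℓ ∣ a then 0 else χ a := by
    ext a
    have hcop : a.Coprime (ℓ ^ k * N₀) ↔ ¬ℓ ∣ a ∧ a.Coprime N₀ := by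
      rw [Nat.coprime_mul_iff_right, Nat.coprime_pow_right_iff (Nat.pos_of_ne_zero hk),
        Nat.coprime_comm, hℓ.coprime_iff_not_dvd]
    by_cases h : ℓ ∣ a <;> simp [χ, hcop, h]
  rw [hsplit, bernoulliSum_ite_dvd hℓ.ne_zero (dvd_mul_of_dvd_left (dvd_pow_self ℓ hk) N₀)]
  simp only [hχℓ]
  have hdiv : ℓ ^ k * N₀ / ℓ = ℓ ^ (k - 1) * N₀ :=
    Nat.div_eq_of_eq_mul_left hℓ.pos (by
      rw [mul_right_comm, ← pow_succ, Nat.sub_add_cancel (Nat.one_le_iff_ne_zero.mpr hk)])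
  rw [hdiv, bernoulliSum_mul_of_periodic hχ (pow_ne_zero _ hℓ.ne_zero),
    bernoulliSum_mul_of_periodic hχ (pow_ne_zero _ hℓ.ne_zero), sub_self]

end BernoulliSum

section UnitDelta
variable (k : Type*) [Semiring k] {R G : Type*} [Monoid R] [Group G]

open scoped Classical in
noncomputable def unitDelta (π : Rˣ →* G) (x : R) : MonoidAlgebra k G :=
  if h : IsUnit x then MonoidAlgebra.single (π h.unit)⁻¹ 1 else 0

theorem unitDelta_units (π : Rˣ →* G) (u : Rˣ) :
    unitDelta k π (u : R) = MonoidAlgebra.single (π u)⁻¹ 1 := by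
  rw [unitDelta, dif_pos u.isUnit, IsUnit.unit_of_val_units]

theorem unitDelta_units_mul {π : Rˣ →* G} {u : Rˣ} (hu : π u = 1) (x : R) :
    unitDelta k π (u * x) = unitDelta k π x := by
  by_cases hx : IsUnit x
  · obtain ⟨v, rfl⟩ := hx
    rw [← Units.val_mul, unitDelta_units, unitDelta_units, map_mul, hu, one_mul]
  · rw [unitDelta, unitDelta, dif_neg hx, dif_neg (by rwa [Units.isUnit_units_mul])]

end UnitDelta

theorem ZMod.unitsMap_unitOfCoprime {f m a : ℕ} (hdvd : m ∣ f) (h : a.Coprime f) :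
    ZMod.unitsMap hdvd (ZMod.unitOfCoprime a h)
      = ZMod.unitOfCoprime a (h.coprime_dvd_right hdvd) :=
  Units.ext (by simp [ZMod.unitsMap_def])

theorem mapDomainRingHom_stickelberger {f m : ℕ} (hdvd : m ∣ f) {G : Type*} [Group G]
    (π : (ZMod m)ˣ →* G) :
    MonoidAlgebra.mapDomainRingHom ℚ (π.comp (ZMod.unitsMap hdvd)) (stickelberger f)
      = -bernoulliSum f fun a => if a.Coprime f then unitDelta ℚ π (a : ZMod m) else 0 := by
  rw [stickelberger, map_neg, map_sum, bernoulliSum]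
  refine congrArg _ (sum_congr rfl fun a _ => ?_)
  by_cases h : a.Coprime f
  · rw [dif_pos h, if_pos h, map_rat_smul, MonoidAlgebra.mapDomainRingHom_apply,
      MonoidAlgebra.mapDomain_single, MonoidHom.comp_apply, map_inv, map_inv,
      ZMod.unitsMap_unitOfCoprime, ← ZMod.coe_unitOfCoprime a (h.coprime_dvd_right hdvd),
      unitDelta_units]
  · rw [dif_neg h, if_neg h, map_zero, smul_zero]

theorem statement14_general (f m : ℕ) (hf : 3 ≤ f) (hdvd : m ∣ f)
    (H : Subgroup (ZMod m)ˣ)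
    (hcond :
      (∃ ℓ : ℕ, ∃ hℓ : ℓ.Prime, ℓ ∣ f ∧ ∃ hnd : ¬ ℓ ∣ m,
        ZMod.unitOfCoprime ℓ (hℓ.coprime_iff_not_dvd.mpr hnd) ∈ H)
      ∨ (-1 : (ZMod m)ˣ) ∈ H) :
    MonoidAlgebra.mapDomainRingHom ℚ
        ((QuotientGroup.mk' H).comp (ZMod.unitsMap hdvd))
        (stickelberger f) = 0 := by
  rw [mapDomainRingHom_stickelberger, neg_eq_zero]
  rcases hcond with ⟨ℓ, hℓ, hℓf, hℓm, hℓH⟩ | hneg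
  · refine bernoulliSum_coprime_eq_zero_of_mul_prime (m := m) (fun a => ?_) hℓ hℓf hℓm hdvd
      (fun a => ?_) (by omega)
    · simp only [Nat.cast_add, ZMod.natCast_self, add_zero]
    · rw [Nat.cast_mul, ← ZMod.coe_unitOfCoprime ℓ (hℓ.coprime_iff_not_dvd.mpr hℓm),
        unitDelta_units_mul]
      exact (QuotientGroup.eq_one_iff _).mpr hℓH
  · refine bernoulliSum_coprime_eq_zero_of_reflect (by omega) fun a ha => ?_
    rw [Nat.cast_sub ha.le, (ZMod.natCast_eq_zero_iff f m).mpr hdvd, zero_sub, neg_eq_neg_one_mul,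
      ← Units.val_one, ← Units.val_neg, unitDelta_units_mul]
    exact (QuotientGroup.eq_one_iff _).mpr hneg

theorem statement14 (f m : ℕ) (hf : 3 ≤ f) (hm : 1 ≤ m) (hdvd : m ∣ f)
    (H : Subgroup (ZMod m)ˣ)
    (hcond :
      (∃ ℓ : ℕ, ∃ hℓ : ℓ.Prime, ℓ ∣ f ∧ ∃ hnd : ¬ ℓ ∣ m,
        ZMod.unitOfCoprime ℓ (hℓ.coprime_iff_not_dvd.mpr hnd) ∈ H)
      ∨ (-1 : (ZMod m)ˣ) ∈ H) :
    MonoidAlgebra.mapDomainRingHom ℚ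
        ((QuotientGroup.mk' H).comp (ZMod.unitsMap hdvd))
        (stickelberger f) = 0 :=
  statement14_general f m hf hdvd H hcond
end
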